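/- arXiv:quant-ph/0508063 — 4 statements merged into one kernel-verified Lean document; each statement's English description precedes it below -/
import Mathlib

section
/- For observables on a finite outcome space Ω = {1,…,n}, F is a coarse-graining of E if and only if F is a fuzzy version of E, and this holds exactly when there exists an n×n row-stochastic matrix (ν_{jk}) with F_k = Σ_j ν_{jk} E_j for all k. -/
open MeasureTheory ProbabilityTheory

set_option maxHeartbeats 1000000
set_option linter.unusedSectionVars false

noncomputable section

/-- An observable (normalized positive-operator measure) on the outcome space `Ω`,
encoded together with the probability measures it induces on (unit) vector states:
for a unit vector `ψ`, `prob ψ` is the probability measure `X ↦ ⟪ψ, E(X) ψ⟫`. -/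
structure POVM (Ω : Type*) [MeasurableSpace Ω] (H : Type*) [NormedAddCommGroup H]
    [InnerProductSpace ℂ H] where
  val : Set Ω → (H →L[ℂ] H)
  val_univ : val Set.univ = 1
  prob : H → Measure Ω
  prob_isProb : ∀ ψ : H, ‖ψ‖ = 1 → IsProbabilityMeasure (prob ψ)
  prob_eq : ∀ (ψ : H) (X : Set Ω), MeasurableSet X →
    (inner ℂ ψ (val X ψ) : ℂ) = (((prob ψ) X).toReal : ℂ)

/-- A state (density operator), given through an orthonormal decomposition
`T = ∑ᵢ cᵢ |ψᵢ⟩⟨ψᵢ|` with `cᵢ ≥ 0`, `∑ᵢ cᵢ = 1`, `‖ψᵢ‖ = 1`. -/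
structure MixedState (H : Type*) [NormedAddCommGroup H] [InnerProductSpace ℂ H] where
  coeff : ℕ → ℝ
  vec : ℕ → H
  coeff_nonneg : ∀ i, 0 ≤ coeff i
  vec_norm : ∀ i, ‖vec i‖ = 1
  coeff_hasSum : HasSum coeff 1

/-- The expectation `tr[T A]` of an operator `A` in the state `T`. -/
def MixedState.exp {H : Type*} [NormedAddCommGroup H] [InnerProductSpace ℂ H]
    (T : MixedState H) (A : H →L[ℂ] H) : ℝ :=
  ∑' i, T.coeff i * (inner ℂ (T.vec i) (A (T.vec i)) : ℂ).re

/-- The outcome probability `p^E_T(X) = tr[T E(X)]`. -/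
def POVM.pMeas {Ω : Type*} [MeasurableSpace Ω] {H : Type*} [NormedAddCommGroup H]
    [InnerProductSpace ℂ H] (E : POVM Ω H) (T : MixedState H) (X : Set Ω) : ℝ :=
  ∑' i, T.coeff i * ((E.prob (T.vec i)) X).toReal

/-- The outcome probability distribution `p^E_T` as a measure on `Ω`. -/
def POVM.pMeasure {Ω : Type*} [MeasurableSpace Ω] {H : Type*} [NormedAddCommGroup H]
    [InnerProductSpace ℂ H] (E : POVM Ω H) (T : MixedState H) : Measure Ω :=
  Measure.sum fun i => ENNReal.ofReal (T.coeff i) • E.prob (T.vec i)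

section Aux

variable {H : Type*} [NormedAddCommGroup H] [InnerProductSpace ℂ H] [CompleteSpace H]

lemma re_inner_nonneg {A : H →L[ℂ] H} (hA : A.IsPositive) (ψ : H) :
    0 ≤ (inner ℂ ψ (A ψ) : ℂ).re := by
  simpa using (Complex.le_def.mp (hA.inner_nonneg_right ψ)).1

lemma re_inner_le_one {A : H →L[ℂ] H} (hA : (1 - A).IsPositive) {ψ : H} (hψ : ‖ψ‖ = 1) :
    (inner ℂ ψ (A ψ) : ℂ).re ≤ 1 := by
  have h := hA.inner_nonneg_right ψ
  have h2 : (inner ℂ ψ ψ : ℂ) = 1 := by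
    rw [inner_self_eq_norm_sq_to_K, hψ]; norm_num
  simp only [ContinuousLinearMap.sub_apply, ContinuousLinearMap.one_apply, inner_sub_right,
    h2, RCLike.re_to_complex, Complex.sub_re, Complex.one_re] at h
  replace h := (Complex.le_def.mp h).1; simp at h
  linarith

lemma exp_summable (T : MixedState H) {A : H →L[ℂ] H} (hA : A.IsPositive)
    (hA' : (1 - A).IsPositive) :
    Summable (fun i => T.coeff i * (inner ℂ (T.vec i) (A (T.vec i)) : ℂ).re) := by
  refine Summable.of_nonneg_of_le (fun i => ?_) (fun i => ?_) T.coeff_hasSum.summable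
  · exact mul_nonneg (T.coeff_nonneg i) (re_inner_nonneg hA _)
  · calc T.coeff i * (inner ℂ (T.vec i) (A (T.vec i)) : ℂ).re
        ≤ T.coeff i * 1 := by
          exact mul_le_mul_of_nonneg_left (re_inner_le_one hA' (T.vec_norm i)) (T.coeff_nonneg i)
      _ = T.coeff i := mul_one _

lemma exp_sum_smul (T : MixedState H) {n : ℕ} (c : Fin n → ℝ) (E : Fin n → (H →L[ℂ] H))
    (hEpos : ∀ j, (E j).IsPositive) (hEbdd : ∀ j, (1 - E j).IsPositive) :
    T.exp (∑ j, c j • E j) = ∑ j, c j * T.exp (E j) := by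
  unfold MixedState.exp
  have key : ∀ i, T.coeff i * (inner ℂ (T.vec i) ((∑ j, c j • E j) (T.vec i)) : ℂ).re
      = ∑ j, c j * (T.coeff i * (inner ℂ (T.vec i) ((E j) (T.vec i)) : ℂ).re) := by
    intro i
    rw [ContinuousLinearMap.sum_apply, inner_sum]
    have : ∀ j, (inner ℂ (T.vec i) ((c j • E j) (T.vec i)) : ℂ)
        = (c j : ℂ) * inner ℂ (T.vec i) ((E j) (T.vec i)) := by
      intro j
      rw [ContinuousLinearMap.smul_apply]
      have : (c j) • ((E j) (T.vec i)) = ((c j : ℂ)) • ((E j) (T.vec i)) := by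
        simp [Complex.coe_smul]
      rw [this, inner_smul_right]
    rw [Finset.sum_congr rfl (fun j _ => this j), Complex.re_sum]
    rw [Finset.mul_sum]
    congr 1; ext j
    simp [Complex.mul_re]
    ring
  rw [tsum_congr key]
  rw [Summable.tsum_finsetSum (fun j _ => Summable.mul_left _ (exp_summable T (hEpos j) (hEbdd j)))]
  congr 1; ext j
  rw [tsum_mul_left]

lemma exp_one (T : MixedState H) : T.exp (1 : H →L[ℂ] H) = 1 := by
  unfold MixedState.exp
  have : ∀ i, T.coeff i * (inner ℂ (T.vec i) ((1 : H →L[ℂ] H) (T.vec i)) : ℂ).re = T.coeff i := by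
    intro i
    have h2 : (inner ℂ (T.vec i) (T.vec i) : ℂ) = 1 := by
      rw [inner_self_eq_norm_sq_to_K, T.vec_norm i]; norm_num
    simp [h2, T.vec_norm i]
  rw [tsum_congr this, T.coeff_hasSum.tsum_eq]

end Aux

section Aux2

variable {H : Type*} [NormedAddCommGroup H] [InnerProductSpace ℂ H]

/-- The pure state determined by a unit vector. -/
def pureState (ψ : H) (hψ : ‖ψ‖ = 1) : MixedState H where
  coeff := fun i => if i = 0 then 1 else 0
  vec := fun _ => ψ
  coeff_nonneg := fun i => by positivity
  vec_norm := fun _ => hψ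
  coeff_hasSum := hasSum_ite_eq 0 1

lemma pureState_exp (ψ : H) (hψ : ‖ψ‖ = 1) (A : H →L[ℂ] H) :
    (pureState ψ hψ).exp A = (inner ℂ ψ (A ψ) : ℂ).re := by
  unfold MixedState.exp pureState
  simp only
  have : ∀ i : ℕ, (if i = 0 then (1:ℝ) else 0) * (inner ℂ ψ (A ψ) : ℂ).re
      = (if i = 0 then (inner ℂ ψ (A ψ) : ℂ).re else 0) := by
    intro i; split <;> ring
  rw [tsum_congr this, tsum_ite_eq]

/-- An affine map on the probability simplex is given by its values on vertices. -/
lemma affine_simplex {n : ℕ} (Ψ : (Fin n → ℝ) → (Fin n → ℝ))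
    (haff : ∀ p q : Fin n → ℝ, ((∀ j, 0 ≤ p j) ∧ ∑ j, p j = 1) →
      ((∀ j, 0 ≤ q j) ∧ ∑ j, q j = 1) → ∀ t : ℝ, 0 ≤ t → t ≤ 1 →
        Ψ (fun j => t * p j + (1 - t) * q j) = fun k => t * Ψ p k + (1 - t) * Ψ q k) :
    ∀ s : Finset (Fin n), ∀ p : Fin n → ℝ, (∀ j, 0 ≤ p j) → (∀ j ∉ s, p j = 0) →
      ∑ j, p j = 1 →
      Ψ p = fun k => ∑ j ∈ s, p j * Ψ (fun j' => if j' = j then 1 else 0) k := by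
  intro s
  induction s using Finset.induction_on with
  | empty =>
    intro p hpos hsupp hsum
    exfalso
    have : ∑ j, p j = 0 := Finset.sum_eq_zero fun j _ => hsupp j (Finset.notMem_empty j)
    rw [hsum] at this; norm_num at this
  | @insert a s ha ih =>
    intro p hpos hsupp hsum
    have hpa_le : p a ≤ 1 := by
      rw [← hsum]
      exact Finset.single_le_sum (fun j _ => hpos j) (Finset.mem_univ a)
    have e_prob : ∀ b : Fin n, (∀ j, 0 ≤ (fun j' => if j' = b then (1:ℝ) else 0) j) ∧
        ∑ j, (fun j' => if j' = b then (1:ℝ) else 0) j = 1 := by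
      intro b
      constructor
      · intro j; dsimp; split <;> norm_num
      · simp
    rcases eq_or_lt_of_le hpa_le with h1 | h1
    · -- p a = 1, so p = e_a
      have hzero : ∀ j, j ≠ a → p j = 0 := by
        intro j hj
        by_contra hne
        have hpj : 0 < p j := lt_of_le_of_ne (hpos j) (Ne.symm hne)
        have : 1 + p j ≤ ∑ j, p j := by
          have := Finset.add_sum_erase Finset.univ p (Finset.mem_univ a)
          rw [← this, h1]
          have : p j ≤ ∑ x ∈ Finset.univ.erase a, p x :=
            Finset.single_le_sum (fun i _ => hpos i)
              (Finset.mem_erase.mpr ⟨hj, Finset.mem_univ j⟩)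
          linarith
        rw [hsum] at this; linarith
      have hp : p = fun j' => if j' = a then 1 else 0 := by
        funext j; split
        · next h => rw [h, ← h1]
        · next h => exact hzero j h
      funext k
      rw [Finset.sum_insert ha, hp]
      have : ∀ j ∈ s, (if j = a then (1:ℝ) else 0) * Ψ (fun j' => if j' = j then 1 else 0) k = 0 := by
        intro j hj
        have : j ≠ a := fun h => ha (h ▸ hj)
        simp [this]
      rw [Finset.sum_eq_zero this]
      simp
    · -- p a < 1
      set t := p a with ht
      set q : Fin n → ℝ := fun j => if j = a then 0 else p j / (1 - t) with hq
      have h1t : (0:ℝ) < 1 - t := by linarith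
      have hqpos : ∀ j, 0 ≤ q j := by
        intro j; rw [hq]; dsimp; split
        · exact le_refl 0
        · have := hpos j; positivity
      have hqsupp : ∀ j ∉ s, q j = 0 := by
        intro j hj
        rw [hq]; dsimp; split
        · rfl
        · next h =>
          have : j ∉ insert a s := by
            intro hmem
            rcases Finset.mem_insert.mp hmem with h' | h'
            · exact h h'
            · exact hj h'
          rw [hsupp j this]; ring
      have hqsum : ∑ j, q j = 1 := by
        have h2 : ∑ j, (1 - t) * q j = 1 - t := by
          have hterm : ∀ j : Fin n, (1 - t) * q j = p j - (if j = a then p j else 0) := by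
            intro j; rw [hq]; dsimp; split
            · next h => subst h; ring
            · field_simp; ring
          rw [Finset.sum_congr rfl (fun j _ => hterm j), Finset.sum_sub_distrib, hsum]
          simp [ht]
        rw [← Finset.mul_sum] at h2
        have := mul_left_cancel₀ (ne_of_gt h1t) (h2.trans (mul_one (1 - t)).symm)
        exact this
      have hdecomp : p = fun j => t * (if j = a then 1 else 0) + (1 - t) * q j := by
        funext j
        rw [hq]; dsimp
        by_cases h : j = a
        · subst h; simp [ht]
        · simp only [if_neg h]
          field_simp; ring
      have key := haff (fun j' => if j' = a then 1 else 0) q (e_prob a) ⟨hqpos, hqsum⟩ t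
        (hpos a) (le_of_lt h1)
      rw [← hdecomp] at key
      rw [key, ih q hqpos hqsupp hqsum]
      funext k
      rw [Finset.sum_insert ha]
      have : ∀ j ∈ s, (1 - t) * (q j * Ψ (fun j' => if j' = j then 1 else 0) k)
          = p j * Ψ (fun j' => if j' = j then 1 else 0) k := by
        intro j hj
        have hja : j ≠ a := fun h => ha (h ▸ hj)
        rw [hq]; dsimp; rw [if_neg hja]
        field_simp
      rw [Finset.mul_sum, Finset.sum_congr rfl this]

end Aux2

/-- for observables on a finite outcome space `Ω = {1,…,n}`, `F` is a
coarse-graining of `E` iff `F` is a fuzzy version of `E`, i.e. iff there exists an `n×n`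
row-stochastic matrix `(ν_{jk})` with `F_k = Σ_j ν_{jk} E_j`. -/
theorem stmt_9 {H : Type*} [NormedAddCommGroup H] [InnerProductSpace ℂ H] [CompleteSpace H]
    {n : ℕ} (E F : Fin n → (H →L[ℂ] H))
    (hEpos : ∀ j, (E j).IsPositive) (hEbdd : ∀ j, (1 - E j).IsPositive)
    (hEsum : ∑ j, E j = 1)
    (hFpos : ∀ k, (F k).IsPositive) (hFbdd : ∀ k, (1 - F k).IsPositive)
    (hFsum : ∑ k, F k = 1) :
    (∃ Ψ : (Fin n → ℝ) → (Fin n → ℝ),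
      (∀ p : Fin n → ℝ, (∀ j, 0 ≤ p j) → ∑ j, p j = 1 →
        (∀ k, 0 ≤ Ψ p k) ∧ ∑ k, Ψ p k = 1) ∧
      (∀ p q : Fin n → ℝ, ((∀ j, 0 ≤ p j) ∧ ∑ j, p j = 1) →
        ((∀ j, 0 ≤ q j) ∧ ∑ j, q j = 1) → ∀ t : ℝ, 0 ≤ t → t ≤ 1 →
          Ψ (fun j => t * p j + (1 - t) * q j) = fun k => t * Ψ p k + (1 - t) * Ψ q k) ∧
      (∀ (T : MixedState H) (k : Fin n), T.exp (F k) = Ψ (fun j => T.exp (E j)) k))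
    ↔ (∃ ν : Fin n → Fin n → ℝ, (∀ j k, 0 ≤ ν j k) ∧ (∀ j, ∑ k, ν j k = 1) ∧
        ∀ k, F k = ∑ j, ν j k • E j) := by

  constructor
  · rintro ⟨Ps, h1, h2, h3⟩
    refine ⟨fun j k => Ps (fun j' => if j' = j then 1 else 0) k, ?_, ?_, ?_⟩
    · intro j k
      exact (h1 (fun j' => if j' = j then 1 else 0)
        (fun j' => by split <;> norm_num) (by simp)).1 k
    · intro j
      exact (h1 (fun j' => if j' = j then 1 else 0)
        (fun j' => by split <;> norm_num) (by simp)).2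
    · intro k
      set G : H →L[ℂ] H := ∑ j, Ps (fun j' => if j' = j then 1 else 0) k • E j with hG
      have state_eq : ∀ T : MixedState H, T.exp (F k) = T.exp G := by
        intro T
        have hpT_pos : ∀ j, 0 ≤ T.exp (E j) := fun j =>
          tsum_nonneg fun i => mul_nonneg (T.coeff_nonneg i) (re_inner_nonneg (hEpos j) _)
        have hpT_sum : ∑ j, T.exp (E j) = 1 := by
          have h := exp_sum_smul T (fun _ => (1 : ℝ)) E hEpos hEbdd
          simp only [one_smul, one_mul] at h
          rw [hEsum, exp_one] at h
          exact h.symm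
        have haffs := affine_simplex Ps h2 Finset.univ (fun j => T.exp (E j)) hpT_pos
          (fun j hj => absurd (Finset.mem_univ j) hj) hpT_sum
        rw [h3 T k, haffs, hG, exp_sum_smul T _ E hEpos hEbdd]
        exact Finset.sum_congr rfl fun j _ => mul_comm _ _
      have hFsym : ∀ x y : H, (inner ℂ ((F k) x) y : ℂ) = inner ℂ x ((F k) y) := fun x y =>
        (hFpos k).1 x y
      have hEsym : ∀ j, ∀ x y : H, (inner ℂ ((E j) x) y : ℂ) = inner ℂ x ((E j) y) := fun j x y =>
        (hEpos j).1 x y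
      have hGsym : ∀ x y : H, (inner ℂ (G x) y : ℂ) = inner ℂ x (G y) := by
        intro x y
        rw [hG]
        simp only [ContinuousLinearMap.sum_apply, ContinuousLinearMap.smul_apply,
          sum_inner, inner_sum]
        refine Finset.sum_congr rfl fun j _ => ?_
        have hc : ∀ (c : ℝ) (v : H), c • v = ((c : ℂ)) • v := fun c v => (Complex.coe_smul c v).symm
        rw [hc, hc, inner_smul_left, inner_smul_right, Complex.conj_ofReal, hEsym j x y]
      set D : H →L[ℂ] H := F k - G with hD
      have hsym : ∀ x y : H, (inner ℂ (D x) y : ℂ) = inner ℂ x (D y) := by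
        intro x y
        rw [hD]
        simp only [ContinuousLinearMap.sub_apply, inner_sub_left, inner_sub_right]
        rw [hFsym x y, hGsym x y]
      have hre : ∀ ψ : H, ‖ψ‖ = 1 → (inner ℂ ψ (D ψ) : ℂ).re = 0 := by
        intro ψ hψ
        have hse := state_eq (pureState ψ hψ)
        rw [pureState_exp, pureState_exp] at hse
        simp only [hD, ContinuousLinearMap.sub_apply, inner_sub_right, Complex.sub_re]
        linarith
      have huz : ∀ u : H, ‖u‖ = 1 → (inner ℂ (D u) u : ℂ) = 0 := by
        intro u hu
        have hs : (inner ℂ (D u) u : ℂ) = inner ℂ u (D u) := hsym u u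
        have him : (inner ℂ u (D u) : ℂ).im = 0 := by
          have hc : (starRingEnd ℂ) (inner ℂ u (D u) : ℂ) = inner ℂ u (D u) := by
            rw [inner_conj_symm]; exact hs
          exact Complex.conj_eq_iff_im.mp hc
        rw [hs]
        exact Complex.ext (hre u hu) him
      have hallz : ∀ x : H, (inner ℂ (D x) x : ℂ) = 0 := by
        intro x
        rcases eq_or_ne x 0 with rfl | hx
        · simp
        · have hnx : (0 : ℝ) < ‖x‖ := norm_pos_iff.mpr hx
          set u : H := ((‖x‖ : ℂ))⁻¹ • x with hu
          have hun : ‖u‖ = 1 := by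
            rw [hu, norm_smul]
            simp [hnx.ne']
          have hxu : x = (‖x‖ : ℂ) • u := by
            rw [hu, smul_smul]
            rw [mul_inv_cancel₀ (by exact_mod_cast hnx.ne'), one_smul]
          rw [hxu, D.map_smul, inner_smul_left, inner_smul_right, huz u hun]
          ring
      have hDzero : (D : H →ₗ[ℂ] H) = 0 :=
        (inner_map_self_eq_zero (D : H →ₗ[ℂ] H)).mp (fun x => hallz x)
      have hD0 : D = 0 := ContinuousLinearMap.coe_injective
        (hDzero.trans (ContinuousLinearMap.coe_zero).symm)
      rw [hD] at hD0
      rw [sub_eq_zero] at hD0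
      exact hD0
  · rintro ⟨ν, hν0, hν1, hνF⟩
    refine ⟨fun p k => ∑ j, ν j k * p j, ?_, ?_, ?_⟩
    · intro p hp hps
      constructor
      · intro k
        exact Finset.sum_nonneg fun j _ => mul_nonneg (hν0 j k) (hp j)
      · rw [Finset.sum_comm]
        calc ∑ j, ∑ k, ν j k * p j
            = ∑ j, (∑ k, ν j k) * p j := by
              exact Finset.sum_congr rfl fun j _ => (Finset.sum_mul ..).symm
          _ = ∑ j, p j := by
              exact Finset.sum_congr rfl fun j _ => by rw [hν1 j, one_mul]
          _ = 1 := hps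
    · intro p q hp hq t ht0 ht1
      funext k
      simp only
      calc ∑ j, ν j k * (t * p j + (1 - t) * q j)
          = ∑ j, (t * (ν j k * p j) + (1 - t) * (ν j k * q j)) := by
            exact Finset.sum_congr rfl fun j _ => by ring
        _ = t * ∑ j, ν j k * p j + (1 - t) * ∑ j, ν j k * q j := by
            rw [Finset.sum_add_distrib, Finset.mul_sum, Finset.mul_sum]
    · intro T k
      rw [hνF k, exp_sum_smul T (fun j => ν j k) E hEpos hEbdd]
end
end

section
/- For non-trivial effects A, B (neither a scalar multiple of the identity), the 1-0 observables E^A and E^B are fuzzy-equivalent (E^A ≼_f E^B and E^B ≼_f E^A) if and only if A = B or A = I − B. -/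
noncomputable section

/-- for non-trivial effects `A`, `B` (not scalar multiples of the identity),
the 1-0 observables `E^A` and `E^B` are fuzzy-equivalent (`E^A ≼_f E^B` and `E^B ≼_f E^A`,
where `E^A ≼_f E^B` iff `A = t•B + s•(I−B)` for some `s, t ∈ [0,1]`)
if and only if `A = B` or `A = I − B`. -/
theorem stmt_11 {H : Type*} [NormedAddCommGroup H] [InnerProductSpace ℂ H] [CompleteSpace H]
    (A B : H →L[ℂ] H)
    (hA : A.IsPositive) (hA' : (1 - A).IsPositive)
    (hB : B.IsPositive) (hB' : (1 - B).IsPositive)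
    (hAnt : ¬ ∃ lam : ℝ, A = lam • (1 : H →L[ℂ] H))
    (hBnt : ¬ ∃ lam : ℝ, B = lam • (1 : H →L[ℂ] H)) :
    ((∃ s t : ℝ, 0 ≤ s ∧ s ≤ 1 ∧ 0 ≤ t ∧ t ≤ 1 ∧ A = t • B + s • (1 - B)) ∧
     (∃ s t : ℝ, 0 ≤ s ∧ s ≤ 1 ∧ 0 ≤ t ∧ t ≤ 1 ∧ B = t • A + s • (1 - A)))
    ↔ (A = B ∨ A = 1 - B) := by
  constructor
  · rintro ⟨⟨s, t, hs0, hs1, ht0, ht1, hAe⟩, ⟨s', t', hs'0, hs'1, ht'0, ht'1, hBe⟩⟩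
    rw [hAe] at hBe
    have key : (1 - (t' - s') * (t - s)) • B
        = (t' * s + s' * (1 - s)) • (1 : H →L[ℂ] H) := by
      linear_combination (norm := module) hBe
    by_cases hk : (t' - s') * (t - s) = 1
    · have h3 : (t - s)^2 * (t' - s')^2 = 1 := by nlinarith [hk]
      have h2 : (t' - s')^2 ≤ 1 := by nlinarith
      have h1 : (t - s)^2 = 1 := by nlinarith [sq_nonneg (t - s)]
      have hsq : (t - s - 1) * (t - s + 1) = 0 := by linear_combination h1
      rcases mul_eq_zero.mp hsq with h | h
      · have ht : t = 1 := by linarith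
        have hs : s = 0 := by linarith
        left; rw [hAe, ht, hs]; simp
      · have ht : t = 0 := by linarith
        have hs : s = 1 := by linarith
        right; rw [hAe, ht, hs]; simp
    · exfalso
      apply hBnt
      have h1 : (1 - (t' - s') * (t - s)) ≠ 0 := fun h => hk (by linarith)
      refine ⟨(1 - (t' - s') * (t - s))⁻¹ * (t' * s + s' * (1 - s)), ?_⟩
      calc B = (1 - (t' - s') * (t - s))⁻¹ • ((1 - (t' - s') * (t - s)) • B) := by
              rw [smul_smul, inv_mul_cancel₀ h1, one_smul]
        _ = _ := by rw [key, smul_smul]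
  · rintro (rfl | rfl)
    · exact ⟨⟨0, 1, le_refl 0, zero_le_one, zero_le_one, le_refl 1, by simp⟩,
        ⟨0, 1, le_refl 0, zero_le_one, zero_le_one, le_refl 1, by simp⟩⟩
    · refine ⟨⟨1, 0, zero_le_one, le_refl 1, le_refl 0, zero_le_one, by simp⟩,
        ⟨1, 0, zero_le_one, le_refl 1, le_refl 0, zero_le_one, ?_⟩⟩
      simp
end
end

section
/- Let A be an effect with ‖A‖ = ‖I − A‖ = 1. If B is an effect and A = tB + s(I−B) for some s, t ∈ [0,1], then A = B or A = I − B. Hence the 1-0 observable E^A is ≼_f-optimal among all two-outcome observables. -/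
noncomputable section

private lemma effect_norm_le {H : Type*} [NormedAddCommGroup H] [InnerProductSpace ℂ H]
    [CompleteSpace H] (B : H →L[ℂ] H) (hB : B.IsPositive) (hB' : (1 - B).IsPositive) :
    ‖B‖ ≤ 1 := by
  have h1 : B ≤ 1 := by
    rw [← sub_nonneg, ContinuousLinearMap.nonneg_iff_isPositive]; exact hB'
  have h0 : (0 : H →L[ℂ] H) ≤ B := (ContinuousLinearMap.nonneg_iff_isPositive B).mpr hB
  calc ‖B‖ ≤ ‖(1 : H →L[ℂ] H)‖ := CStarAlgebra.norm_le_norm_of_nonneg_of_le h0 h1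
    _ ≤ 1 := ContinuousLinearMap.norm_id_le

/-- if `A` is an effect with `‖A‖ = ‖I − A‖ = 1`, `B` is an effect, and
`A = t•B + s•(I−B)` for some `s, t ∈ [0,1]`, then `A = B` or `A = I − B`.
(Hence the 1-0 observable `E^A` is `≼_f`-optimal among two-outcome observables.) -/
theorem stmt_12 {H : Type*} [NormedAddCommGroup H] [InnerProductSpace ℂ H] [CompleteSpace H]
    (A B : H →L[ℂ] H)
    (hA : A.IsPositive) (hA' : (1 - A).IsPositive)
    (hB : B.IsPositive) (hB' : (1 - B).IsPositive)
    (hnA : ‖A‖ = 1) (hnA' : ‖(1 : H →L[ℂ] H) - A‖ = 1)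
    (s t : ℝ) (hs : 0 ≤ s) (hs1 : s ≤ 1) (ht : 0 ≤ t) (ht1 : t ≤ 1)
    (h : A = t • B + s • (1 - B)) :
    A = B ∨ A = 1 - B := by
  have hnB : ‖B‖ ≤ 1 := effect_norm_le B hB hB'
  have hnB' : ‖(1 : H →L[ℂ] H) - B‖ ≤ 1 := by
    have := effect_norm_le (1 - B) hB' (by simpa using hB)
    simpa using this
  rcases le_total s t with hst | hst
  · -- A = (t - s) • B + s • 1, forces t = 1, then s = 0, A = B
    left
    have hAeq : A = (t - s) • B + s • (1 : H →L[ℂ] H) := by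
      rw [h]; module
    have ht' : t = 1 := by
      refine le_antisymm ht1 ?_
      have : (1 : ℝ) ≤ (t - s) * ‖B‖ + s * ‖(1 : H →L[ℂ] H)‖ := by
        calc (1 : ℝ) = ‖A‖ := hnA.symm
          _ ≤ ‖(t - s) • B‖ + ‖s • (1 : H →L[ℂ] H)‖ := by rw [hAeq]; exact norm_add_le _ _
          _ = (t - s) * ‖B‖ + s * ‖(1 : H →L[ℂ] H)‖ := by
              rw [norm_smul, norm_smul, Real.norm_eq_abs, Real.norm_eq_abs,
                abs_of_nonneg (by linarith), abs_of_nonneg hs]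
      have hb1 : (t - s) * ‖B‖ ≤ t - s :=
        mul_le_of_le_one_right (by linarith) hnB
      have hb2 : s * ‖(1 : H →L[ℂ] H)‖ ≤ s :=
        mul_le_of_le_one_right hs ContinuousLinearMap.norm_id_le
      linarith
    have hs' : s = 0 := by
      have h2 : (1 : H →L[ℂ] H) - A = (1 - s) • ((1 : H →L[ℂ] H) - B) := by
        rw [h, ht']; module
      have : (1 : ℝ) ≤ (1 - s) * ‖(1 : H →L[ℂ] H) - B‖ := by
        calc (1 : ℝ) = ‖(1 : H →L[ℂ] H) - A‖ := hnA'.symm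
          _ ≤ (1 - s) * ‖(1 : H →L[ℂ] H) - B‖ := le_of_eq <| by
              rw [h2, norm_smul, Real.norm_eq_abs, abs_of_nonneg (by linarith)]
      have : (1 : ℝ) ≤ 1 - s := le_trans this (mul_le_of_le_one_right (by linarith) hnB')
      linarith
    rw [h, ht', hs']; simp
  · -- A = (s - t) • (1 - B) + t • 1, forces s = 1, then t = 0, A = 1 - B
    right
    have hAeq : A = (s - t) • ((1 : H →L[ℂ] H) - B) + t • (1 : H →L[ℂ] H) := by
      rw [h]; module
    have hs' : s = 1 := by
      refine le_antisymm hs1 ?_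
      have : (1 : ℝ) ≤ (s - t) * ‖(1 : H →L[ℂ] H) - B‖ + t * ‖(1 : H →L[ℂ] H)‖ := by
        calc (1 : ℝ) = ‖A‖ := hnA.symm
          _ ≤ ‖(s - t) • ((1 : H →L[ℂ] H) - B)‖ + ‖t • (1 : H →L[ℂ] H)‖ := by
              rw [hAeq]; exact norm_add_le _ _
          _ = (s - t) * ‖(1 : H →L[ℂ] H) - B‖ + t * ‖(1 : H →L[ℂ] H)‖ := by
              rw [norm_smul, norm_smul, Real.norm_eq_abs, Real.norm_eq_abs,
                abs_of_nonneg (by linarith), abs_of_nonneg ht]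
      have hb1 : (s - t) * ‖(1 : H →L[ℂ] H) - B‖ ≤ s - t :=
        mul_le_of_le_one_right (by linarith) hnB'
      have hb2 : t * ‖(1 : H →L[ℂ] H)‖ ≤ t :=
        mul_le_of_le_one_right ht ContinuousLinearMap.norm_id_le
      linarith
    have ht' : t = 0 := by
      have h2 : (1 : H →L[ℂ] H) - A = (1 - t) • B := by
        rw [h, hs']; module
      have : (1 : ℝ) ≤ (1 - t) * ‖B‖ := by
        calc (1 : ℝ) = ‖(1 : H →L[ℂ] H) - A‖ := hnA'.symm
          _ ≤ (1 - t) * ‖B‖ := le_of_eq <| by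
              rw [h2, norm_smul, Real.norm_eq_abs, abs_of_nonneg (by linarith)]
      have : (1 : ℝ) ≤ 1 - t := le_trans this (mul_le_of_le_one_right (by linarith) hnB)
      linarith
    rw [h, hs', ht']; simp
end
end

section
/- For a photodetector with efficiency 0 < ε ≤ 1, the photon counting observable F^ε is informationally equivalent to the number observable E^N: for states T₁, T₂, if tr[T₁ F^ε_n] = tr[T₂ F^ε_n] for all n ∈ ℕ, then ⟨m|T₁|m⟩ = ⟨m|T₂|m⟩ for all m ∈ ℕ, i.e., tr[T₁ E^N_m] = tr[T₂ E^N_m] for all m. -/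
noncomputable section



/-- The `n`-th binomial-transform series of `a` at `x`. -/
def bbQ (a : ℕ → ℂ) (n : ℕ) (x : ℝ) : ℂ :=
  ∑' m : ℕ, (((m.choose n : ℝ) * x ^ (m - n) : ℝ) : ℂ) * a m

lemma sumAQ (n : ℕ) {r : ℝ} (h1 : |r| < 1) :
    Summable fun m : ℕ => (m.choose n : ℝ) * r ^ (m - n) := by
  have h := summable_choose_mul_geometric_of_norm_lt_one (R := ℝ) n (by simpa using h1)
  refine (summable_nat_add_iff n).1 (h.congr fun q => ?_)
  simp [Nat.add_sub_cancel]

lemma sumBQabs {g : ℕ → ℝ} (hg : Summable g) (hg0 : ∀ m, 0 ≤ g m)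
    (n : ℕ) {r : ℝ} (h0 : 0 ≤ r) (h1 : r < 1) :
    Summable fun m : ℕ => (m.choose n : ℝ) * r ^ (m - n) * g m := by
  have hM : ∀ m, g m ≤ ∑' k, g k := fun m => Summable.le_tsum hg m fun _ _ => hg0 _
  refine Summable.of_nonneg_of_le (fun m => ?_) (fun m => ?_)
    ((sumAQ n (by rwa [abs_of_nonneg h0])).mul_right (∑' k, g k))
  · exact mul_nonneg (mul_nonneg (by positivity) (pow_nonneg h0 _)) (hg0 m)
  · exact mul_le_mul_of_nonneg_left (hM m) (by positivity)

lemma sumBQ {g : ℕ → ℂ} (hg : Summable fun m => ‖g m‖) (n : ℕ) {x : ℝ} (h1 : |x| < 1) :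
    Summable fun m : ℕ => (((m.choose n : ℝ) * x ^ (m - n) : ℝ) : ℂ) * g m := by
  refine Summable.of_norm ((sumBQabs hg (fun m => norm_nonneg _) n (abs_nonneg x) h1).congr
    fun m => ?_)
  rw [norm_mul, Complex.norm_real, Real.norm_eq_abs, abs_mul, abs_pow,
    Nat.abs_cast]
lemma finsumQ (m j : ℕ) (u v : ℝ) :
    ∑ i ∈ Finset.range (m - j + 1),
      (m.choose j : ℝ) * (((m - j).choose i : ℝ)) * u ^ i * v ^ (m - j - i)
      = (m.choose j : ℝ) * (u + v) ^ (m - j) := by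
  rw [add_pow, Finset.mul_sum]
  exact Finset.sum_congr rfl fun i _ => by ring

lemma chooseQ (m j i : ℕ) :
    m.choose j * (m - j).choose i = (j + i).choose i * m.choose (j + i) := by
  by_cases h : j + i ≤ m
  · have h2 := Nat.choose_mul (n := m) (k := j + i) (s := j) (Nat.le_add_right _ _)
    rw [Nat.choose_symm_add, Nat.add_sub_cancel_left] at h2
    rw [← h2, Nat.mul_comm]
  · rcases Nat.lt_or_ge m j with hm | hm
    · simp [Nat.choose_eq_zero_of_lt hm, Nat.choose_eq_zero_of_lt (show m < j + i by omega)]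
    · simp [Nat.choose_eq_zero_of_lt (show m - j < i by omega),
        Nat.choose_eq_zero_of_lt (show m < j + i by omega)]


lemma keyCQ {a : ℕ → ℂ} (ha : Summable fun m => ‖a m‖) {x y : ℝ}
    (hxy : |x| + |y| < 1) (h0 : ∀ n, bbQ a n x = 0) (j : ℕ) :
    bbQ a j (x + y) = 0 := by
  have hx1 : |x| < 1 := lt_of_le_of_lt (le_add_of_nonneg_right (abs_nonneg y)) hxy
  set F : ℕ × ℕ → ℂ := fun p =>
    (((p.1.choose j : ℝ) * ((p.1 - j).choose p.2 : ℝ) * y ^ p.2 * x ^ (p.1 - j - p.2) : ℝ) : ℂ)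
      * a p.1 with hF
  have hout : ∀ m : ℕ, ∀ i ∉ Finset.range (m - j + 1), F (m, i) = 0 := by
    intro m i hi
    simp only [Finset.mem_range, not_lt] at hi
    have h' : m - j < i := by omega
    simp [hF, Nat.choose_eq_zero_of_lt h']
  -- Step 1 : rows indexed by m
  have h1 : ∀ m : ℕ, HasSum (fun i => F (m, i))
      ((((m.choose j : ℝ) * (x + y) ^ (m - j) : ℝ) : ℂ) * a m) := by
    intro m
    have hs := hasSum_sum_of_ne_finset_zero (L := SummationFilter.unconditional ℕ) (hout m)
    convert hs using 1
    have hsum : ∑ i ∈ Finset.range (m - j + 1), F (m, i)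
        = ((∑ i ∈ Finset.range (m - j + 1),
            (m.choose j : ℝ) * (((m - j).choose i : ℝ)) * y ^ i * x ^ (m - j - i) : ℝ) : ℂ)
          * a m := by
      rw [Complex.ofReal_sum, Finset.sum_mul]
    rw [hsum, finsumQ, add_comm y x]
  -- Step 2 : columns indexed by i all sum to zero
  have h2 : ∀ i : ℕ, HasSum (fun m => F (m, i)) 0 := by
    intro i
    have hb : HasSum (fun m => (((m.choose (j + i) : ℝ) * x ^ (m - (j + i)) : ℝ) : ℂ) * a m)
        (0 : ℂ) := by
      have hh := (sumBQ ha (j + i) hx1).hasSum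
      rwa [show (∑' m, (((m.choose (j + i) : ℝ) * x ^ (m - (j + i)) : ℝ) : ℂ) * a m)
        = bbQ a (j + i) x from rfl, h0 (j + i)] at hh
    have hmul := hb.mul_left ((((j + i).choose i : ℝ) * y ^ i : ℝ) : ℂ)
    rw [mul_zero] at hmul
    refine HasSum.congr_fun hmul fun m => ?_
    have hc : (m.choose j : ℂ) * ((m - j).choose i : ℂ)
        = ((j + i).choose i : ℂ) * (m.choose (j + i) : ℂ) := by exact_mod_cast chooseQ m j i
    simp only [hF, Nat.sub_sub]
    push_cast
    linear_combination ((y : ℂ)) ^ i * ((x : ℂ)) ^ (m - (j + i)) * a m * hc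
  -- Step 3 : summability on the product
  have hFs : Summable F := by
    refine Summable.of_norm ?_
    have key : ∀ m i : ℕ, ‖F (m, i)‖
        = (m.choose j : ℝ) * ((m - j).choose i : ℝ) * |y| ^ i * |x| ^ (m - j - i) * ‖a m‖ := by
      intro m i
      simp only [hF, norm_mul, Complex.norm_real, Real.norm_eq_abs]
      rw [abs_pow, abs_pow, Nat.abs_cast, Nat.abs_cast]
    rw [summable_prod_of_nonneg (fun p => norm_nonneg _)]
    constructor
    · intro m
      exact summable_of_ne_finset_zero (s := Finset.range (m - j + 1))
        fun i hi => by rw [hout m i hi, norm_zero]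
    · have hrow : ∀ m : ℕ, (∑' i, ‖F (m, i)‖)
          = (m.choose j : ℝ) * (|x| + |y|) ^ (m - j) * ‖a m‖ := by
        intro m
        rw [tsum_eq_sum (s := Finset.range (m - j + 1))
          (fun i hi => by rw [hout m i hi, norm_zero])]
        calc ∑ i ∈ Finset.range (m - j + 1), ‖F (m, i)‖
            = (∑ i ∈ Finset.range (m - j + 1),
                (m.choose j : ℝ) * ((m - j).choose i : ℝ) * |y| ^ i * |x| ^ (m - j - i))
                * ‖a m‖ := by
              rw [Finset.sum_mul]; exact Finset.sum_congr rfl fun i _ => key m i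
          _ = _ := by rw [finsumQ, add_comm |y| |x|]
      refine Summable.congr ?_ (fun m => (hrow m).symm)
      exact sumBQabs ha (fun m => norm_nonneg _) j (by positivity) hxy
  -- Step 4 : combine
  have hswap : Summable fun p : ℕ × ℕ => F p.swap := hFs.prod_symm
  have hz : HasSum (fun _ : ℕ => (0 : ℂ)) (∑' p : ℕ × ℕ, F p.swap) :=
    hswap.hasSum.prod_fiberwise fun i => h2 i
  have hS0 : (∑' p : ℕ × ℕ, F p.swap) = 0 := (hasSum_zero.unique hz).symm
  have hfin := hFs.hasSum.prod_fiberwise h1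
  have hswap_eq : (∑' p : ℕ × ℕ, F p) = ∑' p : ℕ × ℕ, F p.swap := by
    rw [← (Equiv.prodComm ℕ ℕ).tsum_eq fun p => F p.swap]
    rfl
  rw [hswap_eq, hS0] at hfin
  exact hfin.tsum_eq
lemma bbQ_zero (a : ℕ → ℂ) (n : ℕ) : bbQ a n 0 = a n := by
  unfold bbQ
  rw [tsum_eq_single n]
  · simp
  · intro m hm
    rcases Nat.lt_or_ge m n with hmn | hmn
    · simp [Nat.choose_eq_zero_of_lt hmn]
    · have : m - n ≠ 0 := by omega
      simp [zero_pow this]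

lemma mainQ {a : ℕ → ℂ} (ha : Summable fun m => ‖a m‖) {x₀ : ℝ}
    (h0 : 0 ≤ x₀) (h1 : x₀ < 1) (hb : ∀ n, bbQ a n x₀ = 0) : ∀ m, a m = 0 := by
  obtain ⟨K, hK⟩ := exists_nat_gt (x₀ / (1 - x₀))
  have h1' : (0:ℝ) < 1 - x₀ := by linarith
  have hKpos : (0 : ℝ) < K := lt_of_le_of_lt (div_nonneg h0 h1'.le) hK
  set δ : ℝ := x₀ / K with hδdef
  have hδ0 : 0 ≤ δ := by positivity
  have hKδ : (K : ℝ) * δ = x₀ := by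
    rw [hδdef, mul_div_cancel₀ _ (ne_of_gt hKpos)]
  have hδlt : δ < 1 - x₀ := by
    rw [hδdef, div_lt_iff₀ hKpos]
    calc x₀ < (1 - x₀) * K := by
          rwa [← div_lt_iff₀' h1']
    _ = (1 - x₀) * K := rfl
  have step : ∀ k : ℕ, k ≤ K → ∀ n, bbQ a n (x₀ - k * δ) = 0 := by
    intro k
    induction k with
    | zero => intro _ n; simpa using hb n
    | succ k ih =>
      intro hk n
      have hk' : k ≤ K := Nat.le_of_succ_le hk
      have hkK : (k : ℝ) ≤ K := Nat.cast_le.2 hk'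
      have hp0 : 0 ≤ x₀ - k * δ := by
        have : (k : ℝ) * δ ≤ K * δ := mul_le_mul_of_nonneg_right hkK hδ0
        rw [hKδ] at this; linarith
    
      have habs : |x₀ - k * δ| + |(-δ)| < 1 := by
        rw [abs_of_nonneg hp0, abs_neg, abs_of_nonneg hδ0]
        have hkδ : (k : ℝ) * δ ≥ 0 := mul_nonneg (Nat.cast_nonneg k) hδ0
        linarith
      have := keyCQ ha habs (fun n => ih hk' n) n
      have heq : x₀ - k * δ + (-δ) = x₀ - (k + 1 : ℕ) * δ := by push_cast; ring
      rwa [heq] at this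
  have hfin := step K le_rfl
  have hzero : x₀ - (K : ℝ) * δ = 0 := by rw [hKδ]; ring
  intro m
  have := hfin m
  rw [hzero, bbQ_zero] at this
  exact this

/-- for a photodetector with efficiency `0 < ε ≤ 1`, the photon counting
observable `F^ε` is informationally equivalent to the number observable `E^N`: for states
`T₁`, `T₂` (positive operators of trace one, the trace being computed in the number basis
`e`), if `tr[T₁ F^ε_n] = tr[T₂ F^ε_n]` for all `n`, i.e.
`Σ_m C(m,n) εⁿ (1−ε)^{m−n} ⟨m|T₁|m⟩ = Σ_m C(m,n) εⁿ (1−ε)^{m−n} ⟨m|T₂|m⟩` for all `n`,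
then `⟨m|T₁|m⟩ = ⟨m|T₂|m⟩`, i.e. `tr[T₁ E^N_m] = tr[T₂ E^N_m]`, for all `m`. -/
theorem stmt_17 {H : Type*} [NormedAddCommGroup H] [InnerProductSpace ℂ H] [CompleteSpace H]
    (e : HilbertBasis ℕ ℂ H)
    (ε : ℝ) (hε0 : 0 < ε) (hε1 : ε ≤ 1)
    (T₁ T₂ : H →L[ℂ] H)
    (hT₁pos : T₁.IsPositive) (hT₂pos : T₂.IsPositive)
    (hT₁tr : HasSum (fun m : ℕ => (inner ℂ (e m) (T₁ (e m)) : ℂ)) 1)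
    (hT₂tr : HasSum (fun m : ℕ => (inner ℂ (e m) (T₂ (e m)) : ℂ)) 1)
    (h : ∀ n : ℕ,
      (∑' m : ℕ, ((m.choose n : ℝ) * ε ^ n * (1 - ε) ^ (m - n) : ℂ)
          * (inner ℂ (e m) (T₁ (e m)) : ℂ))
        = ∑' m : ℕ, ((m.choose n : ℝ) * ε ^ n * (1 - ε) ^ (m - n) : ℂ)
          * (inner ℂ (e m) (T₂ (e m)) : ℂ)) :
    ∀ m : ℕ, (inner ℂ (e m) (T₁ (e m)) : ℂ) = (inner ℂ (e m) (T₂ (e m)) : ℂ) := by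
  set d₁ : ℕ → ℂ := fun m => (inner ℂ (e m) (T₁ (e m)) : ℂ) with hd₁
  set d₂ : ℕ → ℂ := fun m => (inner ℂ (e m) (T₂ (e m)) : ℂ) with hd₂
  have hs₁ : Summable fun m => ‖d₁ m‖ := summable_norm_iff.2 hT₁tr.summable
  have hs₂ : Summable fun m => ‖d₂ m‖ := summable_norm_iff.2 hT₂tr.summable
  set a : ℕ → ℂ := fun m => d₁ m - d₂ m with hadef
  have ha : Summable fun m => ‖a m‖ := by
    refine Summable.of_nonneg_of_le (fun m => norm_nonneg _) (fun m => ?_) (hs₁.add hs₂)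
    exact norm_sub_le _ _
  have hx0 : 0 ≤ 1 - ε := by linarith
  have hx1 : 1 - ε < 1 := by linarith
  have hxabs : |1 - ε| < 1 := by rw [abs_of_nonneg hx0]; exact hx1
  -- each hypothesis sum splits as ε^n times the binomial series
  have hcoef : ∀ n m : ℕ, ((m.choose n : ℝ) * ε ^ n * (1 - ε) ^ (m - n) : ℂ)
      = ((ε ^ n : ℝ) : ℂ) * (((m.choose n : ℝ) * (1 - ε) ^ (m - n) : ℝ) : ℂ) := by
    intro n m; push_cast; ring
  have hb : ∀ n, bbQ a n (1 - ε) = 0 := by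
    intro n
    have hS₁ := sumBQ hs₁ n hxabs
    have hS₂ := sumBQ hs₂ n hxabs
    have e₁ : (∑' m : ℕ, ((m.choose n : ℝ) * ε ^ n * (1 - ε) ^ (m - n) : ℂ) * d₁ m)
        = ((ε ^ n : ℝ) : ℂ) * bbQ d₁ n (1 - ε) := by
      rw [show bbQ d₁ n (1 - ε)
          = ∑' m : ℕ, (((m.choose n : ℝ) * (1 - ε) ^ (m - n) : ℝ) : ℂ) * d₁ m from rfl,
        ← tsum_mul_left]
      exact tsum_congr fun m => by rw [hcoef n m, mul_assoc]
    have e₂ : (∑' m : ℕ, ((m.choose n : ℝ) * ε ^ n * (1 - ε) ^ (m - n) : ℂ) * d₂ m)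
        = ((ε ^ n : ℝ) : ℂ) * bbQ d₂ n (1 - ε) := by
      rw [show bbQ d₂ n (1 - ε)
          = ∑' m : ℕ, (((m.choose n : ℝ) * (1 - ε) ^ (m - n) : ℝ) : ℂ) * d₂ m from rfl,
        ← tsum_mul_left]
      exact tsum_congr fun m => by rw [hcoef n m, mul_assoc]
    have hcancel : bbQ d₁ n (1 - ε) = bbQ d₂ n (1 - ε) := by
      have hne : ((ε ^ n : ℝ) : ℂ) ≠ 0 := by
        simp only [ne_eq, Complex.ofReal_eq_zero]
        positivity
      have hh := h n
      rw [e₁, e₂] at hh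
      exact mul_left_cancel₀ hne hh
    have hsub : bbQ a n (1 - ε) = bbQ d₁ n (1 - ε) - bbQ d₂ n (1 - ε) := by
      unfold bbQ
      rw [← Summable.tsum_sub hS₁ hS₂]
      exact tsum_congr fun m => by rw [hadef]; ring
    rw [hsub, hcancel, sub_self]
  intro m
  have := mainQ ha hx0 hx1 hb m
  have : d₁ m - d₂ m = 0 := this
  have := sub_eq_zero.1 this
  simpa [hd₁, hd₂] using this
end
end
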